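/- Let U ⊆ F_q^n be a subspace. Then U is an LCD code (U ∩ U^⊥ = {0} for the Euclidean inner product) if and only if F_q^{n×m}(U) is a Delsarte LCD code (F_q^{n×m}(U) ∩ F_q^{n×m}(U)^⊥ = {0} for the trace inner product), for m ≥ 1. -/

import Mathlib

variable (F : Type*) [Field F] [Fintype F] (n m : ℕ)

/-- `F^{n×m}(U)`: matrices all of whose columns (hence whose column space) lie in `U`. -/
def matricesWithColsIn (U : Submodule F (Fin n → F)) :
    Submodule F (Matrix (Fin n) (Fin m) F) where
  carrier := {A | ∀ j : Fin m, (fun i => A i j) ∈ U}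
  add_mem' := by intro A B hA hB j; exact U.add_mem (hA j) (hB j)
  zero_mem' := by intro j; exact U.zero_mem
  smul_mem' := by intro c A hA j; exact U.smul_mem c (hA j)

/-- The Euclidean (dot product) bilinear form on `F^n`. -/
noncomputable def dotBilin : LinearMap.BilinForm F (Fin n → F) :=
  LinearMap.mk₂ F (fun x y => dotProduct x y)
    (by intros; simp [add_dotProduct])
    (by intros; simp [smul_dotProduct])
    (by intros; simp [dotProduct_add])
    (by intros; simp [dotProduct_smul])

/-- The Euclidean dual of `U ⊆ F^n`. -/
noncomputable def euclDual (U : Submodule F (Fin n → F)) : Submodule F (Fin n → F) :=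
  (dotBilin F n).orthogonal U

/-- The trace inner product `⟨A,B⟩ = Tr(A * Bᵀ)` on `F^{n×m}` as a bilinear form. -/
noncomputable def traceBilin : LinearMap.BilinForm F (Matrix (Fin n) (Fin m) F) :=
  LinearMap.mk₂ F (fun A B => (A * B.transpose).trace)
    (by intros; simp [Matrix.add_mul])
    (by intros; simp [Matrix.smul_mul])
    (by intros; simp [Matrix.transpose_add, Matrix.mul_add])
    (by intros; simp [Matrix.transpose_smul, Matrix.mul_smul])

/-- Dual with respect to the trace inner product. -/
noncomputable def traceDual (C : Submodule F (Matrix (Fin n) (Fin m) F)) :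
    Submodule F (Matrix (Fin n) (Fin m) F) :=
  (traceBilin F n m).orthogonal C

section Aux
variable {F : Type*} [Field F] [Fintype F] {n m : ℕ}

lemma trace_mul_transpose_eq (A B : Matrix (Fin n) (Fin m) F) :
    (A * B.transpose).trace = ∑ j : Fin m, dotProduct (fun i => A i j) (fun i => B i j) := by
  simp [Matrix.trace, Matrix.mul_apply, dotProduct, Matrix.diag]
  rw [Finset.sum_comm]

lemma mem_traceDual_iff (U : Submodule F (Fin n → F)) (A : Matrix (Fin n) (Fin m) F) :
    A ∈ traceDual F n m (matricesWithColsIn F n m U) ↔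
      ∀ j : Fin m, (fun i => A i j) ∈ euclDual F n U := by
  constructor
  · intro hA j u hu
    -- take B with column j equal to u, others 0
    set B : Matrix (Fin n) (Fin m) F := fun i j' => if j' = j then u i else 0 with hB
    have hBmem : B ∈ matricesWithColsIn F n m U := by
      intro j'
      by_cases h : j' = j
      · subst h; simpa [hB] using hu
      · have hz : (fun i => B i j') = (0 : Fin n → F) := by funext i; simp [hB, h]
        rw [hz]; exact U.zero_mem
    have := hA B hBmem
    simp only [LinearMap.BilinForm.IsOrtho, traceBilin, LinearMap.mk₂_apply] at this
    rw [trace_mul_transpose_eq] at this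
    have : ∑ j' : Fin m, dotProduct (fun i => B i j') (fun i => A i j') = 0 := this
    rw [Finset.sum_eq_single j] at this
    · simpa [hB, dotBilin] using this
    · intro b _ hb; simp [hB, hb, dotProduct]
    · simp
  · intro h B hB
    show (B * A.transpose).trace = 0
    rw [trace_mul_transpose_eq]
    exact Finset.sum_eq_zero fun j _ => h j _ (hB j)

end Aux

/-- for `m ≥ 1`, `U ⊆ F^n` is LCD (Euclidean duality) if and only if
the Delsarte code `F^{n×m}(U)` is LCD (trace-inner-product duality). -/
theorem matricesWithColsIn_lcd_iff (hm : 0 < m) (U : Submodule F (Fin n → F)) :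
    U ⊓ euclDual F n U = ⊥ ↔
      matricesWithColsIn F n m U ⊓ traceDual F n m (matricesWithColsIn F n m U) = ⊥ := by
  constructor
  · intro h
    rw [Submodule.eq_bot_iff]
    intro A hAm
    obtain ⟨hA1, hA2⟩ := Submodule.mem_inf.mp hAm
    rw [mem_traceDual_iff] at hA2
    ext i j
    have : (fun i => A i j) ∈ U ⊓ euclDual F n U := ⟨hA1 j, hA2 j⟩
    rw [h, Submodule.mem_bot] at this
    exact congrFun this i
  · intro h
    rw [Submodule.eq_bot_iff]
    intro u hum
    obtain ⟨hu1, hu2⟩ := Submodule.mem_inf.mp hum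
    set A : Matrix (Fin n) (Fin m) F := fun i _ => u i with hA
    have hAmem : A ∈ matricesWithColsIn F n m U ⊓ traceDual F n m (matricesWithColsIn F n m U) := by
      rw [Submodule.mem_inf]
      refine ⟨fun j => hu1, ?_⟩
      rw [mem_traceDual_iff]
      intro j
      exact hu2
    rw [h, Submodule.mem_bot] at hAmem
    ext i
    exact congrFun (congrFun hAmem i) ⟨0, hm⟩
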